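/- Consider an n-bus network with admittance matrix Y ∈ ℂ^{n×n} whose bus set is partitioned as {0} ∪ A₁ ∪ ⋯ ∪ A_m, where 0 is the slack bus with fixed voltage v₀ and Y_{ab} = Y_{ba} = 0 whenever a ∈ A_j and b ∈ A_k with j ≠ k. Each non-slack bus is a PQ bus (enforcing V_i · conj((YV)_i) = s_i) or a PV bus (enforcing Re(V_i · conj((YV)_i)) = p_i and |V_i| = w_i). For each j, let the j-th subnetwork be the network on buses {0} ∪ A_j with admittance matrix the corresponding principal submatrix of Y, the same bus specifications, and slack voltage v₀. Then the cardinality of the solution set of the full network equals the product over j = 1,…,m of the cardinalities of the solution sets of the m subnetworks. -/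

import Mathlib

/-!
Buses in different blocks are not coupled, so the current `(Y V)ᵢ` injected at a bus `i ∈ Aⱼ`
only sees the voltages on `{0} ∪ Aⱼ`; hence every bus equation of the full network is an equation
of exactly one subnetwork. Since the blocks share only the slack bus, whose voltage is pinned to
`v₀` everywhere, restricting a voltage vector to the blocks is a bijection from the solutions of
the full network onto tuples of solutions of the subnetworks.
-/

open Function Matrix

theorem Matrix.mulVec_submatrix_val_apply {ι R : Type*} [NonUnitalNonAssocSemiring R]
    [Fintype ι] {P : ι → Prop} [Fintype {k // P k}] (Y : Matrix ι ι R) (V : ι → R)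
    (i : {k // P k}) (hY : ∀ k, ¬P k → Y i k = 0) :
    (Y.submatrix Subtype.val Subtype.val *ᵥ fun k : {k // P k} => V k) i = (Y *ᵥ V) i := by
  classical
  simp only [mulVec, dotProduct, submatrix_apply]
  rw [← Finset.sum_subtype (Finset.univ.filter P) (by simp) (fun k => Y i k * V k)]
  exact Finset.sum_filter_of_ne fun k _ hk => by_contra fun hPk => hk (by rw [hY k hPk, zero_mul])

namespace PowerFlow

section Gluing

variable {ι κ α : Type*} {o : ι} {A : κ → Set ι}

open Classical in
noncomputable def glue (A : κ → Set ι) (v₀ : α) (W : ∀ j, {i // i = o ∨ i ∈ A j} → α)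
    (i : ι) : α :=
  if h : ∃ j, i ∈ A j then W h.choose ⟨i, Or.inr h.choose_spec⟩ else v₀

theorem glue_apply_of_mem (hdisj : Pairwise (Disjoint on A)) (v₀ : α)
    (W : ∀ j, {i // i = o ∨ i ∈ A j} → α) {i : ι} {j : κ} (hi : i ∈ A j) :
    glue A v₀ W i = W j ⟨i, Or.inr hi⟩ := by
  have h : ∃ j, i ∈ A j := ⟨j, hi⟩
  obtain rfl : h.choose = j := hdisj.eq (Set.not_disjoint_iff.2 ⟨i, h.choose_spec, hi⟩)
  rw [glue, dif_pos h]

theorem glue_apply_slack (ho : ∀ j, o ∉ A j) (v₀ : α) (W : ∀ j, {i // i = o ∨ i ∈ A j} → α) :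
    glue A v₀ W o = v₀ := by
  rw [glue, dif_neg fun ⟨j, hj⟩ => ho j hj]

theorem restrict_glue (ho : ∀ j, o ∉ A j) (hdisj : Pairwise (Disjoint on A)) {v₀ : α}
    {W : ∀ j, {i // i = o ∨ i ∈ A j} → α} {j : κ} (hW : W j ⟨o, Or.inl rfl⟩ = v₀) :
    (fun i : {i // i = o ∨ i ∈ A j} => glue A v₀ W i) = W j := by
  funext ⟨i, hi⟩
  rcases hi with rfl | hi
  · exact (glue_apply_slack ho v₀ W).trans hW.symm
  · exact glue_apply_of_mem hdisj v₀ W hi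

theorem glue_restrict (hcover : ∀ i, i = o ∨ ∃ j, i ∈ A j) {V : ι → α} (hV : V o = v₀) :
    glue A v₀ (fun j (i : {i // i = o ∨ i ∈ A j}) => V i) = V := by
  funext i
  by_cases h : ∃ j, i ∈ A j
  · rw [glue, dif_pos h]
  · rw [glue, dif_neg h, ← hV, (hcover i).resolve_right h]

end Gluing

section Solutions

variable {ι κ : Type*}

def BusEquations [Fintype ι] (Y : Matrix ι ι ℂ) (PQ : Set ι) (s : ι → ℂ) (p w : ι → ℝ)
    (V : ι → ℂ) (i : ι) : Prop :=
  (i ∈ PQ → V i * (starRingEnd ℂ) (Y.mulVec V i) = s i) ∧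
    (i ∉ PQ → (V i * (starRingEnd ℂ) (Y.mulVec V i)).re = p i ∧ ‖V i‖ = w i)

def solutions [Fintype ι] (Y : Matrix ι ι ℂ) (slack : ι) (v₀ : ℂ) (PQ : Set ι) (s : ι → ℂ)
    (p w : ι → ℝ) : Set (ι → ℂ) :=
  {V | V slack = v₀ ∧ ∀ i, i ≠ slack → BusEquations Y PQ s p w V i}

abbrev subnetworkSolutions [Fintype ι] (Y : Matrix ι ι ℂ) (o : ι) (A : κ → Set ι)
    [∀ j, Fintype {i // i = o ∨ i ∈ A j}] (v₀ : ℂ) (PQ : Set ι) (s : ι → ℂ) (p w : ι → ℝ)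
    (j : κ) : Set ({i // i = o ∨ i ∈ A j} → ℂ) :=
  solutions (Y.submatrix Subtype.val Subtype.val) ⟨o, Or.inl rfl⟩ v₀ (Subtype.val ⁻¹' PQ)
    (s ∘ Subtype.val) (p ∘ Subtype.val) (w ∘ Subtype.val)

variable {Y : Matrix ι ι ℂ} {PQ : Set ι} {s : ι → ℂ} {p w : ι → ℝ}

theorem busEquations_submatrix_val_iff [Fintype ι] {P : ι → Prop} [Fintype {k // P k}]
    {V : ι → ℂ} {i : {k // P k}} (hY : ∀ k, ¬P k → Y i k = 0) :
    BusEquations (Y.submatrix Subtype.val Subtype.val) (Subtype.val ⁻¹' PQ) (s ∘ Subtype.val)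
        (p ∘ Subtype.val) (w ∘ Subtype.val) (fun k : {k // P k} => V k) i ↔
      BusEquations Y PQ s p w V i := by
  unfold BusEquations
  rw [Matrix.mulVec_submatrix_val_apply Y V i hY]
  rfl

theorem solutions_submatrix_val {P : ι → Prop} [Fintype {k // P k}] {o : ι} (ho : P o)
    (v₀ : ℂ) :
    solutions (Y.submatrix Subtype.val Subtype.val) ⟨o, ho⟩ v₀ (Subtype.val ⁻¹' PQ)
        (s ∘ Subtype.val) (p ∘ Subtype.val) (w ∘ Subtype.val) =
      {W | W ⟨o, ho⟩ = v₀ ∧ ∀ i : {k // P k}, i.val ≠ o →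
        BusEquations (Y.submatrix Subtype.val Subtype.val) (Subtype.val ⁻¹' PQ)
          (s ∘ Subtype.val) (p ∘ Subtype.val) (w ∘ Subtype.val) W i} := by
  ext W
  simp only [solutions, Set.mem_ofPred_eq, ne_eq, Subtype.ext_iff]

variable {o : ι} {A : κ → Set ι}

theorem row_eq_zero_of_not_mem_block (hcover : ∀ i, i = o ∨ ∃ j, i ∈ A j)
    (hY : ∀ j k, j ≠ k → ∀ a ∈ A j, ∀ b ∈ A k, Y a b = 0) {i : ι} {j : κ} (hi : i ∈ A j) :
    ∀ k, ¬(k = o ∨ k ∈ A j) → Y i k = 0 := by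
  intro k hk
  obtain ⟨hko, hkj⟩ := not_or.1 hk
  obtain ⟨j', hj'⟩ := (hcover k).resolve_left hko
  exact hY j j' (by rintro rfl; exact hkj hj') i hi k hj'

variable [∀ j, Fintype {i // i = o ∨ i ∈ A j}]

theorem mem_solutions_iff_forall_restrict [Fintype ι] (hcover : ∀ i, i = o ∨ ∃ j, i ∈ A j)
    (hY : ∀ j k, j ≠ k → ∀ a ∈ A j, ∀ b ∈ A k, Y a b = 0) {v₀ : ℂ} {V : ι → ℂ} :
    V ∈ solutions Y o v₀ PQ s p w ↔
      V o = v₀ ∧ ∀ j, (fun i : {i // i = o ∨ i ∈ A j} => V i) ∈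
        subnetworkSolutions Y o A v₀ PQ s p w j := by
  constructor
  · rintro ⟨hV, hbus⟩
    refine ⟨hV, fun j => ⟨hV, fun i hi => ?_⟩⟩
    have hio : i.val ≠ o := fun h => hi (Subtype.ext h)
    exact (busEquations_submatrix_val_iff
      (row_eq_zero_of_not_mem_block hcover hY (i.2.resolve_left hio))).2 (hbus i hio)
  · rintro ⟨hV, hsub⟩
    refine ⟨hV, fun i hi => ?_⟩
    obtain ⟨j, hij⟩ := (hcover i).resolve_left hi
    exact (busEquations_submatrix_val_iff (row_eq_zero_of_not_mem_block hcover hY hij)).1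
      ((hsub j).2 ⟨i, Or.inr hij⟩ fun h => hi (congrArg Subtype.val h))

noncomputable def solutionsEquivPi [Fintype ι] (hcover : ∀ i, i = o ∨ ∃ j, i ∈ A j)
    (ho : ∀ j, o ∉ A j) (hdisj : Pairwise (Disjoint on A))
    (hY : ∀ j k, j ≠ k → ∀ a ∈ A j, ∀ b ∈ A k, Y a b = 0) (v₀ : ℂ) :
    solutions Y o v₀ PQ s p w ≃ ∀ j, subnetworkSolutions Y o A v₀ PQ s p w j where
  toFun V j := ⟨fun i => V.1 i, ((mem_solutions_iff_forall_restrict hcover hY).1 V.2).2 j⟩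
  invFun W := ⟨glue A v₀ fun j => (W j).1, (mem_solutions_iff_forall_restrict hcover hY).2
    ⟨glue_apply_slack ho v₀ _, fun j => by rw [restrict_glue ho hdisj (W j).2.1]; exact (W j).2⟩⟩
  left_inv V := Subtype.ext (glue_restrict hcover V.2.1)
  right_inv W := funext fun j =>
    Subtype.ext (restrict_glue (W := fun j => (W j).1) ho hdisj (W j).2.1)

end Solutions

end PowerFlow

open PowerFlow

open scoped Classical

/-- Network whose buses partition as {0} ∪ A₁ ∪ ⋯ ∪ A_m with slack bus 0 (voltage v₀)
and Y_{ab} = Y_{ba} = 0 whenever a ∈ A_j, b ∈ A_k, j ≠ k. Non-slack buses in `PQ`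
enforce V_i conj((YV)_i) = s_i; the remaining non-slack (PV) buses enforce
Re(V_i conj((YV)_i)) = p_i and |V_i| = w_i. The cardinality of the solution set of the
full network equals the product over j of the cardinalities of the solution sets of the
subnetworks on buses {0} ∪ A_j (with the principal submatrices of Y, the same bus
specifications, and slack voltage v₀). -/
theorem stmt5 (n m : ℕ) [NeZero n] (Y : Matrix (Fin n) (Fin n) ℂ) (v₀ : ℂ)
    (A : Fin m → Set (Fin n))
    (hcover : ∀ i : Fin n, i = 0 ∨ ∃ j, i ∈ A j)
    (h0 : ∀ j, (0 : Fin n) ∉ A j)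
    (hdisj : ∀ j k, j ≠ k → Disjoint (A j) (A k))
    (hY : ∀ j k, j ≠ k → ∀ a ∈ A j, ∀ b ∈ A k, Y a b = 0 ∧ Y b a = 0)
    (PQ : Set (Fin n)) (s : Fin n → ℂ) (p w : Fin n → ℝ) :
    Cardinal.mk
      ↥{V : Fin n → ℂ | V 0 = v₀ ∧ ∀ i, i ≠ 0 →
        (i ∈ PQ → V i * (starRingEnd ℂ) (Y.mulVec V i) = s i) ∧
        (i ∉ PQ → (V i * (starRingEnd ℂ) (Y.mulVec V i)).re = p i ∧
          ‖V i‖ = w i)} =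
    ∏ j : Fin m,
      Cardinal.mk
        ↥{W : {i : Fin n // i = 0 ∨ i ∈ A j} → ℂ | W ⟨0, Or.inl rfl⟩ = v₀ ∧
          ∀ i : {i : Fin n // i = 0 ∨ i ∈ A j}, i.val ≠ 0 →
            (i.val ∈ PQ →
              W i * (starRingEnd ℂ)
                ((Y.submatrix Subtype.val Subtype.val).mulVec W i) = s i.val) ∧
            (i.val ∉ PQ →
              (W i * (starRingEnd ℂ)
                ((Y.submatrix Subtype.val Subtype.val).mulVec W i)).re = p i.val ∧
              ‖W i‖ = w i.val)} := by
  have hrow : ∀ j k, j ≠ k → ∀ a ∈ A j, ∀ b ∈ A k, Y a b = 0 :=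
    fun j k hjk a ha b hb => (hY j k hjk a ha b hb).1
  calc Cardinal.mk (solutions Y 0 v₀ PQ s p w)
      = Cardinal.mk (∀ j, subnetworkSolutions Y 0 A v₀ PQ s p w j) :=
        Cardinal.mk_congr (solutionsEquivPi hcover h0 hdisj hrow v₀)
    _ = ∏ j, Cardinal.mk (subnetworkSolutions Y 0 A v₀ PQ s p w j) := by
        rw [Cardinal.mk_pi, Cardinal.prod_eq_of_fintype, Cardinal.lift_id]
    _ = _ := by simp only [subnetworkSolutions, solutions_submatrix_val]; rfl
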